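/- arXiv:2206.01591 — 2 statements merged into one kernel-verified Lean document; each statement's English description precedes it below -/
import Mathlib

section
/- For every integer k ≥ 2, with p_k := log₂ C(2k,k), one has 9^{2 − p_k/k} > 1 + 80/(9·p_k + 1). -/
/-!
Write `p = log₂ C(2k,k) = 2k - x`, so that the left-hand side is `9 ^ (x / k)`. Both sides
decrease in `p`, so it suffices to bound `p` on both sides. The classical estimates
`4ᵏ / (2k) ≤ C(2k,k) ≤ 4ᵏ / √(3k+1)` give `x ≥ 11/4` and `p ≥ 3k/2` once `k ≥ 15`, and then
`9 ^ (x / k) ≥ 1 + x log 9 / k` wins against `80 / (9p + 1) ≤ 80 / (27k/2 + 1)`.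
For `2 ≤ k < 15` the value of `p` is pinned between `a/8` and `(a+1)/8` with
`a = ⌊8 log₂ C(2k,k)⌋`, which leaves a finite rational comparison.
-/

open Real

namespace Nat

theorem centralBinom_sq_mul_le (n : ℕ) : centralBinom n ^ 2 * (3 * n + 1) ≤ 16 ^ n := by
  induction n with
  | zero => simp
  | succ n ih =>
    refine Nat.le_of_mul_le_mul_left ?_ (by positivity : 0 < (n + 1) ^ 2 * (3 * n + 1))
    calc (n + 1) ^ 2 * (3 * n + 1) * (centralBinom (n + 1) ^ 2 * (3 * (n + 1) + 1))
        = (3 * n + 1) * (3 * n + 4) * ((n + 1) * centralBinom (n + 1)) ^ 2 := by ring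
      _ = 4 * (2 * n + 1) ^ 2 * (3 * n + 4) * (centralBinom n ^ 2 * (3 * n + 1)) := by
        rw [succ_mul_centralBinom_succ]; ring
      _ ≤ 16 * (n + 1) ^ 2 * (3 * n + 1) * 16 ^ n := Nat.mul_le_mul (by nlinarith) ih
      _ = (n + 1) ^ 2 * (3 * n + 1) * 16 ^ (n + 1) := by ring

theorem sq_two_mul_le_two_pow {n : ℕ} (hn : 8 ≤ n) : (2 * n) ^ 2 ≤ 2 ^ n := by
  induction n, hn using Nat.le_induction with
  | base => norm_num
  | succ n hn ih =>
    calc (2 * (n + 1)) ^ 2 ≤ 2 * (2 * n) ^ 2 := by nlinarith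
      _ ≤ 2 * 2 ^ n := Nat.mul_le_mul_left 2 ih
      _ = 2 ^ (n + 1) := by ring

end Nat

namespace Real

theorem div_le_logb_of_pow_le {b x : ℝ} (hb : 1 < b) {a n : ℕ} (hn : 0 < n)
    (h : b ^ a ≤ x ^ n) : (a / n : ℝ) ≤ logb b x := by
  have := logb_le_logb_of_le hb (by positivity) h
  rw [logb_pow, logb_pow, logb_self_eq_one hb, mul_one] at this
  rwa [div_le_iff₀ (by positivity), mul_comm]

theorem logb_le_div_of_le_pow {b x : ℝ} (hb : 1 < b) (hx : 0 < x) {a n : ℕ} (hn : 0 < n)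
    (h : x ^ n ≤ b ^ a) : logb b x ≤ a / n := by
  have := logb_le_logb_of_le hb (by positivity) h
  rw [logb_pow, logb_pow, logb_self_eq_one hb, mul_one] at this
  rwa [le_div_iff₀ (by positivity), mul_comm]

theorem lt_rpow_div_of_pow_mul_lt {b R : ℝ} (hb : 0 < b) (hR : 0 ≤ R) {m M N : ℕ}
    (hN : N ≠ 0) (h : R ^ N * b ^ m < b ^ M) : R < b ^ (((M : ℝ) - m) / N) := by
  rw [← pow_lt_pow_iff_left₀ hR (by positivity) hN, ← rpow_mul_natCast hb.le,
    div_mul_cancel₀ _ (by positivity), rpow_sub hb, rpow_natCast, rpow_natCast,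
    lt_div_iff₀ (by positivity)]
  exact h

theorem one_add_mul_log_le_rpow {b : ℝ} (hb : 0 < b) (t : ℝ) : 1 + t * log b ≤ b ^ t := by
  rw [rpow_def_of_pos hb, mul_comm]
  linarith [add_one_le_exp (log b * t)]

theorem log_nine_gt : 2.19 < log 9 := by
  have h98 := one_sub_inv_le_log_of_pos (by norm_num : (0 : ℝ) < 9 / 8)
  have h9 : log 9 = 3 * log 2 + log (9 / 8) := by
    rw [← log_rpow two_pos, ← log_mul (by positivity) (by positivity)]; norm_num
  linarith [log_two_gt_d9]

end Real

theorem logb_two_centralBinom_le (n : ℕ) :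
    logb 2 (Nat.centralBinom n) ≤ 2 * n - logb 2 (3 * n + 1) / 2 := by
  have hC : (0 : ℝ) < Nat.centralBinom n := mod_cast Nat.centralBinom_pos n
  have h : (Nat.centralBinom n : ℝ) ^ 2 * (3 * n + 1) ≤ 2 ^ (4 * n) := by
    rw [pow_mul]; exact_mod_cast Nat.centralBinom_sq_mul_le n
  have := logb_le_logb_of_le one_lt_two (by positivity) h
  rw [logb_mul (by positivity) (by positivity), logb_pow, logb_pow,
    logb_self_eq_one one_lt_two] at this
  push_cast at this
  linarith

theorem two_mul_sub_logb_le_logb_two_centralBinom {n : ℕ} (hn : 0 < n) :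
    2 * n - logb 2 (2 * n) ≤ logb 2 (Nat.centralBinom n) := by
  have hC : (0 : ℝ) < Nat.centralBinom n := mod_cast Nat.centralBinom_pos n
  have h : (2 : ℝ) ^ (2 * n) ≤ 2 * n * Nat.centralBinom n := by
    rw [pow_mul]; exact_mod_cast Nat.four_pow_le_two_mul_self_mul_centralBinom n hn
  have := logb_le_logb_of_le one_lt_two (by positivity) h
  rw [logb_mul (by positivity) (by positivity), logb_pow, logb_self_eq_one one_lt_two] at this
  push_cast at this
  linarith

theorem one_add_div_lt_nine_rpow_of_mem_Icc {k p lo hi : ℝ} (hk : 0 < k) (hlo : 0 ≤ lo)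
    (hp : p ∈ Set.Icc lo hi) (h : 1 + 80 / (9 * lo + 1) < 9 ^ (2 - hi / k)) :
    1 + 80 / (9 * p + 1) < 9 ^ (2 - p / k) :=
  calc 1 + 80 / (9 * p + 1) ≤ 1 + 80 / (9 * lo + 1) := by gcongr; exact hp.1
    _ < 9 ^ (2 - hi / k) := h
    _ ≤ 9 ^ (2 - p / k) := by gcongr; exacts [by norm_num, hp.2]

theorem one_add_div_lt_nine_rpow_of_fifteen_le {k : ℕ} (hk : 15 ≤ k) :
    1 + 80 / (9 * logb 2 (Nat.centralBinom k) + 1) <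
      9 ^ (2 - logb 2 (Nat.centralBinom k) / k) := by
  have hk' : (15 : ℝ) ≤ k := mod_cast hk
  have hlo : 3 * k / 2 ≤ logb 2 (Nat.centralBinom k) := by
    have h2k : logb 2 (2 * k) ≤ k / 2 :=
      logb_le_div_of_le_pow one_lt_two (by positivity) two_pos
        (mod_cast Nat.sq_two_mul_le_two_pow (by omega))
    linarith [two_mul_sub_logb_le_logb_two_centralBinom (by omega : 0 < k)]
  have hhi : logb 2 (Nat.centralBinom k) ≤ 2 * k - 11 / 4 := by
    have h46 : (11 / 2 : ℝ) ≤ logb 2 (3 * k + 1) :=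
      calc (11 / 2 : ℝ) ≤ logb 2 46 := by
            simpa using div_le_logb_of_pow_le (a := 11) (n := 2) one_lt_two two_pos (by norm_num)
        _ ≤ logb 2 (3 * k + 1) := logb_le_logb_of_le one_lt_two (by norm_num) (by linarith)
    linarith [logb_two_centralBinom_le k]
  refine one_add_div_lt_nine_rpow_of_mem_Icc (by positivity) (by positivity) ⟨hlo, hhi⟩ ?_
  have ht : 2 - (2 * k - 11 / 4) / k = 11 / (4 * k : ℝ) := by field_simp; ring
  rw [ht]
  calc 1 + 80 / (9 * (3 * k / 2) + 1) < 1 + 11 / (4 * k) * (2.19 : ℝ) := by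
        rw [add_lt_add_iff_left, div_mul_eq_mul_div,
          div_lt_div_iff₀ (by positivity) (by positivity)]
        nlinarith
    _ ≤ 1 + 11 / (4 * k) * log 9 := by gcongr; exact log_nine_gt.le
    _ ≤ 9 ^ (11 / (4 * k : ℝ)) := one_add_mul_log_le_rpow (by norm_num) _

/-- `Nat.log 2 (C ^ n) = ⌊n log₂ C⌋`, so `h` is a purely rational comparison. -/
theorem one_add_div_lt_nine_rpow_of_natLog_pow {k n : ℕ} (hk : 0 < k) (hn : 0 < n)
    (h : (1 + 80 / (9 * ((Nat.log 2 (Nat.centralBinom k ^ n) : ℝ) / n) + 1)) ^ (k * n) *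
      9 ^ (Nat.log 2 (Nat.centralBinom k ^ n) + 1) < (9 : ℝ) ^ (2 * (k * n))) :
    1 + 80 / (9 * logb 2 (Nat.centralBinom k) + 1) <
      9 ^ (2 - logb 2 (Nat.centralBinom k) / k) := by
  set a := Nat.log 2 (Nat.centralBinom k ^ n)
  have hC : (0 : ℝ) < Nat.centralBinom k := mod_cast Nat.centralBinom_pos k
  have hlo : (a / n : ℝ) ≤ logb 2 (Nat.centralBinom k) :=
    div_le_logb_of_pow_le one_lt_two hn
      (mod_cast Nat.pow_log_le_self 2 (pow_ne_zero n (Nat.centralBinom_ne_zero k)))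
  have hhi : logb 2 (Nat.centralBinom k) ≤ ((a + 1 : ℕ) / n : ℝ) :=
    logb_le_div_of_le_pow one_lt_two hC hn
      (mod_cast (Nat.lt_pow_succ_log_self one_lt_two _).le)
  refine one_add_div_lt_nine_rpow_of_mem_Icc (by positivity) (by positivity) ⟨hlo, hhi⟩ ?_
  have ht : (2 : ℝ) - ((a + 1 : ℕ) / n : ℝ) / k =
      (((2 * (k * n) : ℕ) : ℝ) - (a + 1 : ℕ)) / (k * n : ℕ) := by
    push_cast; field_simp
  rw [ht]
  exact lt_rpow_div_of_pow_mul_lt (by norm_num) (by positivity) (by positivity) h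

/-- For every integer `k ≥ 2`, with `p_k = log₂ C(2k,k)`,
one has `9^{2−p_k/k} > 1 + 80/(9 p_k + 1)`. -/
theorem nine_power_pk_bound (k : ℕ) (hk : 2 ≤ k)
    (pk : ℝ) (hpk : pk = Real.logb 2 (Nat.choose (2 * k) k)) :
    (9 : ℝ) ^ (2 - pk / k) > 1 + 80 / (9 * pk + 1) := by
  rw [← Nat.centralBinom_eq_two_mul_choose] at hpk
  subst hpk
  rcases le_or_gt 15 k with hbig | hsmall
  · exact one_add_div_lt_nine_rpow_of_fifteen_le hbig
  · interval_cases k <;>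
      exact one_add_div_lt_nine_rpow_of_natLog_pow (n := 8) (by norm_num) (by norm_num)
        (by norm_num [Nat.centralBinom_eq_two_mul_choose,
          Nat.choose_eq_descFactorial_div_factorial])
end

section
/- Let k ≥ 2 be an integer, p_k := log₂ C(2k,k), and define ψ_k(y) := p_k · y^{2 − p_k/k} + y^{1 − p_k/k} − y − p_k for y > 0. Then ψ_k(y) > 0 for every y ∈ (1, 9]. -/
/-!
`ψ_k(1) = 0`, and with `a = p_k / k ∈ [1, 2)` one has
`ψ_k''(y) = (1 - a) y^(-a-1) (p_k (2 - a) y - a) ≤ 0` for `y ≥ 1` as soon as `p_k + 1 ≤ 2k`,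
so `ψ_k` is concave on `[1, ∞)` and it suffices to show `ψ_k(9) > 0`, i.e.
`(1 + 80 / (9 p_k + 1))^k < 9^(2k - p_k)`.
The Wallis-type bounds `16^k / (4k) ≤ C(2k,k)^2 ≤ 16^k / (3k + 1)` give `p_k ≥ 7k/4 - 1` and
`9^(2k - p_k) ≥ (3k + 1)^(log₂ 3) ≥ (3k + 1)^(11/7)`. What remains,
`(1 + 320 / (63k - 32))^k < (3k + 1)^(11/7)`, is a finite computation for `k < 16`
and follows from `(1 + x)^k ≤ e^(kx) ≤ e^6` for `k ≥ 16`.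
-/

open Real Set

theorem ConcaveOn.pos_of_mem_Ioc {f : ℝ → ℝ} {s : Set ℝ} (hf : ConcaveOn ℝ s f) {a b y : ℝ}
    (ha : a ∈ s) (hb : b ∈ s) (hfa : 0 ≤ f a) (hfb : 0 < f b) (hy : y ∈ Ioc a b) : 0 < f y := by
  obtain ⟨hay, hyb⟩ := hy
  obtain rfl | hyb := hyb.eq_or_lt
  · exact hfb
  by_contra! hfy
  exact ((hf.right_le_of_le_left ha hb (Ioo_subset_openSegment ⟨hay, hyb⟩)
    (hfy.trans hfa)).trans hfy).not_gt hfb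

theorem lt_rpow_div_iff_pow_lt {x y : ℝ} (hx : 0 ≤ x) (hy : 0 ≤ y) {m n : ℕ} (hn : n ≠ 0) :
    x < y ^ ((m : ℝ) / n) ↔ x ^ n < y ^ m := by
  rw [← pow_lt_pow_iff_left₀ hx (rpow_nonneg hy _) hn, ← rpow_natCast (y ^ _) n, ← rpow_mul hy,
    div_mul_cancel₀ _ (by exact_mod_cast hn), rpow_natCast]

namespace Nat

theorem two_pow_le_centralBinom (n : ℕ) : 2 ^ n ≤ centralBinom n := by
  induction n with
  | zero => simp
  | succ m ih =>
    refine Nat.le_of_mul_le_mul_left ?_ m.succ_pos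
    rw [succ_mul_centralBinom_succ]
    calc (m + 1) * 2 ^ (m + 1) = (2 * m + 2) * 2 ^ m := by ring
      _ ≤ 2 * (2 * m + 1) * 2 ^ m := by gcongr; omega
      _ ≤ 2 * (2 * m + 1) * centralBinom m := by gcongr

theorem sixteen_pow_le_four_mul_mul_centralBinom_sq {n : ℕ} (hn : n ≠ 0) :
    16 ^ n ≤ 4 * n * centralBinom n ^ 2 := by
  induction n with
  | zero => contradiction
  | succ m ih =>
    rcases m.eq_zero_or_pos with rfl | hm
    · decide
    refine Nat.le_of_mul_le_mul_left ?_ (by positivity : 0 < (m + 1) ^ 2)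
    calc (m + 1) ^ 2 * 16 ^ (m + 1) = 16 * (m + 1) ^ 2 * 16 ^ m := by ring
      _ ≤ 16 * (m + 1) ^ 2 * (4 * m * centralBinom m ^ 2) := by gcongr; exact ih hm.ne'
      _ = (4 * m * (m + 1)) * (16 * (m + 1) * centralBinom m ^ 2) := by ring
      _ ≤ (2 * m + 1) ^ 2 * (16 * (m + 1) * centralBinom m ^ 2) := by gcongr; nlinarith
      _ = (m + 1) ^ 2 * (4 * (m + 1) * centralBinom (m + 1) ^ 2) := by
        rw [show (m + 1) ^ 2 * (4 * (m + 1) * centralBinom (m + 1) ^ 2)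
          = 4 * (m + 1) * ((m + 1) * centralBinom (m + 1)) ^ 2 by ring, succ_mul_centralBinom_succ]
        ring

theorem three_mul_add_one_mul_centralBinom_sq_le_sixteen_pow (n : ℕ) :
    (3 * n + 1) * centralBinom n ^ 2 ≤ 16 ^ n := by
  induction n with
  | zero => simp
  | succ m ih =>
    refine Nat.le_of_mul_le_mul_left ?_ (by positivity : 0 < (m + 1) ^ 2)
    calc (m + 1) ^ 2 * ((3 * (m + 1) + 1) * centralBinom (m + 1) ^ 2)
        = (3 * m + 4) * ((m + 1) * centralBinom (m + 1)) ^ 2 := by ring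
      _ = ((3 * m + 4) * 4 * (2 * m + 1) ^ 2) * centralBinom m ^ 2 := by
        rw [succ_mul_centralBinom_succ]; ring
      _ ≤ (16 * (m + 1) ^ 2 * (3 * m + 1)) * centralBinom m ^ 2 :=
        Nat.mul_le_mul_right _ (by nlinarith)
      _ = 16 * (m + 1) ^ 2 * ((3 * m + 1) * centralBinom m ^ 2) := by ring
      _ ≤ 16 * (m + 1) ^ 2 * 16 ^ m := by gcongr
      _ = (m + 1) ^ 2 * 16 ^ (m + 1) := by ring

theorem sq_le_two_pow {n : ℕ} (hn : 4 ≤ n) : n ^ 2 ≤ 2 ^ n := by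
  induction n, hn using Nat.le_induction with
  | base => decide
  | succ m hm ih => rw [pow_succ 2 m]; nlinarith

theorem two_pow_le_sixteen_mul_centralBinom_pow_four {n : ℕ} (hn : 2 ≤ n) :
    2 ^ (7 * n) ≤ 16 * centralBinom n ^ 4 := by
  obtain rfl | rfl | hn := show n = 2 ∨ n = 3 ∨ 4 ≤ n by omega
  · decide
  · decide
  refine Nat.le_of_mul_le_mul_left ?_ (by positivity : 0 < 2 ^ n)
  calc 2 ^ n * 2 ^ (7 * n) = 16 ^ n * 16 ^ n := by
        rw [← pow_add, ← mul_pow, show n + 7 * n = 8 * n from by ring, pow_mul]; norm_num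
    _ ≤ (4 * n * centralBinom n ^ 2) * (4 * n * centralBinom n ^ 2) := by
      have := sixteen_pow_le_four_mul_mul_centralBinom_sq (n := n) (by omega)
      gcongr
    _ = 16 * n ^ 2 * centralBinom n ^ 4 := by ring
    _ ≤ 16 * 2 ^ n * centralBinom n ^ 4 :=
      Nat.mul_le_mul_right _ (Nat.mul_le_mul_left _ (sq_le_two_pow hn))
    _ = 2 ^ n * (16 * centralBinom n ^ 4) := by ring

end Nat

theorem natCast_le_logb_centralBinom (n : ℕ) : (n : ℝ) ≤ logb 2 (n.centralBinom) := by
  rw [le_logb_iff_rpow_le one_lt_two (by exact_mod_cast n.centralBinom_pos), rpow_natCast]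
  exact_mod_cast n.two_pow_le_centralBinom

theorem seven_div_four_mul_sub_one_le_logb_centralBinom {n : ℕ} (hn : 2 ≤ n) :
    7 * (n : ℝ) / 4 - 1 ≤ logb 2 (n.centralBinom) := by
  have hC : (0 : ℝ) < n.centralBinom := by exact_mod_cast n.centralBinom_pos
  have h : ((2 : ℝ) ^ (7 * n)) ≤ 16 * (n.centralBinom : ℝ) ^ 4 := by
    exact_mod_cast Nat.two_pow_le_sixteen_mul_centralBinom_pow_four hn
  have := logb_le_logb_of_le one_lt_two (by positivity) h
  rw [logb_mul (by norm_num) (by positivity), logb_pow, logb_pow, logb_self_eq_one one_lt_two,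
    show (16 : ℝ) = 2 ^ 4 by norm_num, logb_pow, logb_self_eq_one one_lt_two] at this
  push_cast at this
  linarith

theorem logb_three_mul_add_one_add_two_mul_logb_centralBinom_le (n : ℕ) :
    logb 2 (3 * n + 1) + 2 * logb 2 (n.centralBinom) ≤ 4 * n := by
  have hC : (0 : ℝ) < n.centralBinom := by exact_mod_cast n.centralBinom_pos
  have h : (3 * n + 1 : ℝ) * (n.centralBinom : ℝ) ^ 2 ≤ 16 ^ n := by
    exact_mod_cast Nat.three_mul_add_one_mul_centralBinom_sq_le_sixteen_pow n
  have := logb_le_logb_of_le one_lt_two (by positivity) h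
  rw [logb_mul (by positivity) (by positivity), logb_pow, logb_pow,
    show (16 : ℝ) = 2 ^ 4 by norm_num, logb_pow, logb_self_eq_one one_lt_two] at this
  push_cast at this
  linarith

noncomputable def psi (k p y : ℝ) : ℝ := p * y ^ (2 - p / k) + y ^ (1 - p / k) - y - p

theorem psi_one (k p : ℝ) : psi k p 1 = 0 := by simp [psi]

theorem concaveOn_psi {k p : ℝ} (hk : 0 < k) (hkp : k ≤ p) (hp : p + 1 ≤ 2 * k) :
    ConcaveOn ℝ (Ici 1) (psi k p) := by
  set a := p / k with ha
  have ha1 : 1 ≤ a := (one_le_div hk).2 hkp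
  have hpa : a ≤ p * (2 - a) := by
    rw [ha, ← sub_nonneg]
    have : p * (2 - p / k) - p / k = p / k * (2 * k - p - 1) := by field_simp
    rw [this]
    exact mul_nonneg (by positivity) (by linarith)
  have hne : ∀ x ∈ interior (Ici (1 : ℝ)), x ≠ 0 := fun x hx => by
    rw [interior_Ici] at hx; exact (zero_lt_one.trans hx).ne'
  refine concaveOn_of_hasDerivWithinAt2_nonpos (convex_Ici 1)
    (f' := fun y => p * ((2 - a) * y ^ (2 - a - 1)) + (1 - a) * y ^ (1 - a - 1) - 1)
    (f'' := fun y => p * ((2 - a) * ((2 - a - 1) * y ^ (2 - a - 1 - 1)))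
      + (1 - a) * ((1 - a - 1) * y ^ (1 - a - 1 - 1))) ?_ ?_ ?_ ?_
  · have hcont (r : ℝ) : ContinuousOn (fun y : ℝ => y ^ r) (Ici 1) := fun x hx =>
      (continuousAt_rpow_const x r (Or.inl (zero_lt_one.trans_le hx).ne')).continuousWithinAt
    exact (((continuousOn_const.mul (hcont _)).add (hcont _)).sub continuousOn_id).sub
      continuousOn_const
  · intro x hx
    have hx0 := hne x hx
    exact ((((hasDerivAt_rpow_const (Or.inl hx0)).const_mul p).add
      (hasDerivAt_rpow_const (Or.inl hx0))).sub (hasDerivAt_id x)).sub_const p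
      |>.hasDerivWithinAt
  · intro x hx
    have hx0 := hne x hx
    exact (((((hasDerivAt_rpow_const (Or.inl hx0)).const_mul (2 - a)).const_mul p).add
      ((hasDerivAt_rpow_const (Or.inl hx0)).const_mul (1 - a))).sub_const 1).hasDerivWithinAt
  · intro x hx
    rw [interior_Ici] at hx
    have hx0 : 0 < x := zero_lt_one.trans hx
    have hfactor : p * ((2 - a) * ((2 - a - 1) * x ^ (2 - a - 1 - 1)))
        + (1 - a) * ((1 - a - 1) * x ^ (1 - a - 1 - 1))
        = (1 - a) * (x ^ (-a - 1) * (p * (2 - a) * x - a)) := by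
      rw [show 2 - a - 1 - 1 = (-a - 1) + 1 by ring, rpow_add_one hx0.ne',
        show 1 - a - 1 - 1 = -a - 1 by ring]
      ring
    rw [hfactor]
    refine mul_nonpos_of_nonpos_of_nonneg (by linarith)
      (mul_nonneg (rpow_pos_of_pos hx0 _).le ?_)
    linarith [le_mul_of_one_le_right (by linarith : 0 ≤ p * (2 - a)) hx.le]

theorem psi_nine_pos_of_pow_lt {k : ℕ} (hk : k ≠ 0) {p : ℝ} (hp : 0 < p)
    (h : (1 + 80 / (9 * p + 1)) ^ k < 9 ^ (2 * k - p)) : 0 < psi k p 9 := by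
  have hk0 : (0 : ℝ) < k := by positivity
  set t := (9 : ℝ) ^ ((2 * k - p) / k)
  have ht : 1 + 80 / (9 * p + 1) < t := by
    refine lt_of_pow_lt_pow_left₀ k (by positivity) ?_
    rwa [← rpow_natCast t k, ← rpow_mul (by norm_num), div_mul_cancel₀ _ hk0.ne']
  have hpsi : psi k p 9 = (t * (9 * p + 1) - 9 * (9 + p)) / 9 := by
    rw [psi, show 2 - p / k = (2 * k - p) / k by field_simp,
      show 1 - p / k = (2 * k - p) / k - 1 by field_simp; ring, rpow_sub_one (by norm_num)]
    ring
  have hmul : (1 + 80 / (9 * p + 1)) * (9 * p + 1) = 9 * (9 + p) := by field_simp; ring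
  have hlt := mul_lt_mul_of_pos_right ht (by positivity : 0 < 9 * p + 1)
  rw [hmul] at hlt
  rw [hpsi]
  linarith

theorem rpow_eleven_div_seven_le_nine_rpow {x s : ℝ} (hx : 1 ≤ x) (hs : logb 2 x ≤ 2 * s) :
    x ^ (11 / 7 : ℝ) ≤ 9 ^ s := by
  set L := logb 2 x
  have hL : 0 ≤ L := logb_nonneg one_lt_two hx
  have h23 : (2 : ℝ) ^ (11 / 7 : ℝ) ≤ 3 := by
    rw [← not_lt, show (11 / 7 : ℝ) = ((11 : ℕ) : ℝ) / (7 : ℕ) by norm_num,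
      lt_rpow_div_iff_pow_lt (by norm_num) (by norm_num) (by norm_num)]
    norm_num
  calc x ^ (11 / 7 : ℝ) = ((2 : ℝ) ^ (11 / 7 : ℝ)) ^ L := by
        rw [← rpow_mul zero_le_two, mul_comm, rpow_mul zero_le_two,
          rpow_logb two_pos (by norm_num) (by linarith)]
    _ ≤ 3 ^ L := rpow_le_rpow (by positivity) h23 hL
    _ = 9 ^ (L / 2) := by
      rw [show (9 : ℝ) = 3 ^ (2 : ℝ) by norm_num, ← rpow_mul (by norm_num)]; ring_nf
    _ ≤ 9 ^ s := rpow_le_rpow_of_exponent_le (by norm_num) (by linarith)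

theorem one_add_div_pow_lt_rpow {k : ℕ} (hk : 2 ≤ k) :
    (1 + 320 / (63 * k - 32)) ^ k < (3 * k + 1 : ℝ) ^ (11 / 7 : ℝ) := by
  have hk' : (2 : ℝ) ≤ k := by exact_mod_cast hk
  have hx : 0 ≤ 320 / (63 * k - 32 : ℝ) := div_nonneg (by norm_num) (by linarith)
  rcases lt_or_ge k 16 with hsmall | hbig
  · rw [show (11 / 7 : ℝ) = ((11 : ℕ) : ℝ) / (7 : ℕ) by norm_num,
      lt_rpow_div_iff_pow_lt (pow_nonneg (by linarith) _) (by positivity) (by norm_num)]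
    interval_cases k <;> norm_num
  have hk16 : (16 : ℝ) ≤ k := by exact_mod_cast hbig
  set x : ℝ := 320 / (63 * k - 32)
  have hkx : k * x ≤ 6 := by
    rw [mul_div_assoc', div_le_iff₀ (by linarith)]; linarith
  calc (1 + x) ^ k ≤ exp x ^ k := pow_le_pow_left₀ (by linarith) (by linarith [add_one_le_exp x]) k
    _ = exp (k * x) := (exp_nat_mul x k).symm
    _ ≤ exp 1 ^ 6 := by rw [← exp_nat_mul]; exact exp_le_exp.2 (by push_cast; linarith)
    _ < 404 := by
      calc exp 1 ^ 6 < 2.7182818286 ^ 6 := by gcongr; exact exp_one_lt_d9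
        _ < 404 := by norm_num
    _ < 49 ^ (11 / 7 : ℝ) := by
      rw [show (11 / 7 : ℝ) = ((11 : ℕ) : ℝ) / (7 : ℕ) by norm_num,
        lt_rpow_div_iff_pow_lt (by positivity) (by positivity) (by norm_num)]
      norm_num
    _ ≤ (3 * k + 1) ^ (11 / 7 : ℝ) := by gcongr; linarith

theorem one_le_two_mul_sub_logb_centralBinom {k : ℕ} (hk : 1 ≤ k) :
    1 ≤ 2 * k - logb 2 (k.centralBinom) := by
  have h4 : 2 ≤ logb 2 (3 * k + 1 : ℝ) := by
    rw [le_logb_iff_rpow_le one_lt_two (by positivity)]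
    have : (1 : ℝ) ≤ k := by exact_mod_cast hk
    norm_num; linarith
  linarith [logb_three_mul_add_one_add_two_mul_logb_centralBinom_le k]

theorem concaveOn_psi_centralBinom {k : ℕ} (hk : 1 ≤ k) :
    ConcaveOn ℝ (Ici 1) (psi k (logb 2 (k.centralBinom))) :=
  concaveOn_psi (by exact_mod_cast hk) (natCast_le_logb_centralBinom k)
    (by linarith [one_le_two_mul_sub_logb_centralBinom hk])

theorem psi_centralBinom_nine_pos {k : ℕ} (hk : 2 ≤ k) :
    0 < psi k (logb 2 (k.centralBinom)) 9 := by
  set p := logb 2 (k.centralBinom : ℝ)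
  have hk' : (2 : ℝ) ≤ k := by exact_mod_cast hk
  have hlow : 7 * (k : ℝ) / 4 - 1 ≤ p := seven_div_four_mul_sub_one_le_logb_centralBinom hk
  refine psi_nine_pos_of_pow_lt (by omega) (by linarith) ?_
  -- `320 / (63 k - 32) = 80 / (9 q + 1)` for the lower bound `q = 7k/4 - 1` of `p`
  have hp : 0 < 9 * p + 1 := by linarith
  have hq : 80 / (9 * p + 1) ≤ 320 / (63 * k - 32) := by
    rw [div_le_div_iff₀ (by linarith) (by linarith)]; linarith
  calc (1 + 80 / (9 * p + 1)) ^ k ≤ (1 + 320 / (63 * k - 32)) ^ k :=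
        pow_le_pow_left₀ (by positivity) (by linarith) k
    _ < (3 * k + 1) ^ (11 / 7 : ℝ) := one_add_div_pow_lt_rpow hk
    _ ≤ 9 ^ (2 * k - p) := rpow_eleven_div_seven_le_nine_rpow (by linarith)
      (by linarith [logb_three_mul_add_one_add_two_mul_logb_centralBinom_le k])

/-- For integer `k ≥ 2` and `p_k = log₂ C(2k,k)`, the function
`ψ_k(y) = p_k y^{2−p_k/k} + y^{1−p_k/k} − y − p_k` is positive on `(1, 9]`. -/
theorem psi_positive (k : ℕ) (hk : 2 ≤ k)
    (pk : ℝ) (hpk : pk = Real.logb 2 (Nat.choose (2 * k) k))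
    (y : ℝ) (hy : y ∈ Set.Ioc (1 : ℝ) 9) :
    pk * y ^ (2 - pk / k) + y ^ (1 - pk / k) - y - pk > 0 := by
  rw [← Nat.centralBinom_eq_two_mul_choose] at hpk
  subst hpk
  exact (concaveOn_psi_centralBinom (by omega)).pos_of_mem_Ioc self_mem_Ici
    (by norm_num : (9 : ℝ) ∈ Ici 1) (psi_one _ _).ge (psi_centralBinom_nine_pos hk) hy
end
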